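/- arXiv:2602.09395 — 8 statements merged into one kernel-verified Lean document; each statement's English description precedes it below -/
import Mathlib

section
/- Let n ≥ 1, let G : ℝⁿ → ℝⁿ be L-Lipschitz (with respect to the Euclidean norm) for some L ≥ 0, let ρ > 0, let x ∈ ℝⁿ, and let h ∈ ℝⁿ with h ≠ 0. If G(x) ≠ 0, then ‖G(x + ρ·G(x)/‖G(x)‖) − h‖² ≤ 12ρ²L² + 4‖G(x) − h‖². -/
/-! Moving from `x` by a step of length at most `|ρ|` changes `G` by at most `L |ρ|`, so by the
triangle inequality and `(a + b)² ≤ 2a² + 2b²` the squared deviation is at most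
`2 ρ² L² + 2 ‖G x - h‖²`. -/

-- When `v = 0` the junk value `ρ / 0 = 0` makes the left side `0`.
lemma norm_div_norm_smul_le_abs {E : Type*} [SeminormedAddCommGroup E] [NormedSpace ℝ E]
    (ρ : ℝ) (v : E) : ‖(ρ / ‖v‖) • v‖ ≤ |ρ| := by
  rw [norm_smul, norm_div, norm_norm, Real.norm_eq_abs]
  rcases (norm_nonneg v).eq_or_lt with hv | hv
  · simp [← hv]
  · rw [div_mul_cancel₀ _ hv.ne']

lemma sq_norm_sub_le_of_lipschitz {E F : Type*} [SeminormedAddCommGroup E]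
    [SeminormedAddCommGroup F] {G : E → F} {L : ℝ}
    (hLip : ∀ u v : E, ‖G u - G v‖ ≤ L * ‖u - v‖) (u v : E) :
    ‖G u - G v‖ ^ 2 ≤ L ^ 2 * ‖u - v‖ ^ 2 := by
  rw [← mul_pow]
  exact pow_le_pow_left₀ (norm_nonneg _) (hLip u v) 2

lemma sq_norm_sub_le_two_mul_add {E : Type*} [SeminormedAddCommGroup E] (a b c : E) :
    ‖a - c‖ ^ 2 ≤ 2 * ‖a - b‖ ^ 2 + 2 * ‖b - c‖ ^ 2 := by
  calc ‖a - c‖ ^ 2 ≤ (‖a - b‖ + ‖b - c‖) ^ 2 :=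
        pow_le_pow_left₀ (norm_nonneg _) (norm_sub_le_norm_sub_add_norm_sub a b c) 2
    _ ≤ 2 * ‖a - b‖ ^ 2 + 2 * ‖b - c‖ ^ 2 := by linarith [add_sq_le (a := ‖a - b‖) (b := ‖b - c‖)]

theorem sam_perturbed_gradient_deviation_bound_general
    (n : ℕ)
    (G : EuclideanSpace ℝ (Fin n) → EuclideanSpace ℝ (Fin n))
    (L : ℝ)
    (hLip : ∀ u v : EuclideanSpace ℝ (Fin n), ‖G u - G v‖ ≤ L * ‖u - v‖)
    (ρ : ℝ)
    (x h : EuclideanSpace ℝ (Fin n)) :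
    ‖G (x + (ρ / ‖G x‖) • G x) - h‖ ^ 2 ≤ 12 * ρ ^ 2 * L ^ 2 + 4 * ‖G x - h‖ ^ 2 := by
  have hstep : ‖(ρ / ‖G x‖) • G x‖ ^ 2 ≤ ρ ^ 2 := by
    simpa only [sq_abs] using
      pow_le_pow_left₀ (norm_nonneg _) (norm_div_norm_smul_le_abs ρ (G x)) 2
  have hmove : ‖G (x + (ρ / ‖G x‖) • G x) - G x‖ ^ 2 ≤ L ^ 2 * ρ ^ 2 := by
    calc _ ≤ L ^ 2 * ‖(ρ / ‖G x‖) • G x‖ ^ 2 := by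
          simpa only [add_sub_cancel_left] using sq_norm_sub_le_of_lipschitz hLip (x + _) x
      _ ≤ L ^ 2 * ρ ^ 2 := by gcongr
  calc _ ≤ 2 * ‖G (x + (ρ / ‖G x‖) • G x) - G x‖ ^ 2 + 2 * ‖G x - h‖ ^ 2 :=
        sq_norm_sub_le_two_mul_add _ _ _
    _ ≤ 12 * ρ ^ 2 * L ^ 2 + 4 * ‖G x - h‖ ^ 2 := by
      nlinarith [sq_nonneg (ρ * L), sq_nonneg ‖G x - h‖]

/-- Deterministic core of Lemma 3: if `G : ℝⁿ → ℝⁿ` is `L`-Lipschitz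
(Euclidean norm), `ρ > 0`, `h ≠ 0` and `G x ≠ 0`, then
`‖G (x + ρ • G x / ‖G x‖) - h‖² ≤ 12 ρ² L² + 4 ‖G x - h‖²`. -/
theorem sam_perturbed_gradient_deviation_bound
    (n : ℕ) (hn : 1 ≤ n)
    (G : EuclideanSpace ℝ (Fin n) → EuclideanSpace ℝ (Fin n))
    (L : ℝ) (hL : 0 ≤ L)
    (hLip : ∀ u v : EuclideanSpace ℝ (Fin n), ‖G u - G v‖ ≤ L * ‖u - v‖)
    (ρ : ℝ) (hρ : 0 < ρ)
    (x h : EuclideanSpace ℝ (Fin n)) (hh : h ≠ 0)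
    (hGx : G x ≠ 0) :
    ‖G (x + (ρ / ‖G x‖) • G x) - h‖ ^ 2 ≤ 12 * ρ ^ 2 * L ^ 2 + 4 * ‖G x - h‖ ^ 2 :=
  sam_perturbed_gradient_deviation_bound_general n G L hLip ρ x h
end

section
/- Let (Ω, μ) be a probability space, n ≥ 1, L ≥ 0, ρ > 0, σ ≥ 0, x ∈ ℝⁿ, and h ∈ ℝⁿ with h ≠ 0. Let G : ℝⁿ × Ω → ℝⁿ be jointly measurable and suppose that for μ-almost every ω: (i) G(·, ω) is L-Lipschitz with respect to the Euclidean norm, and (ii) G(x, ω) ≠ 0. Suppose moreover that ω ↦ G(x, ω) is Bochner integrable with ∫ G(x, ω) dμ(ω) = h (unbiasedness) and ∫ ‖G(x, ω) − h‖² dμ(ω) ≤ σ². Then ∫ ‖G(x + ρ·G(x, ω)/‖G(x, ω)‖, ω)‖² dμ(ω) ≤ 12ρ²L² + 4σ² + 4‖h‖². -/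
/-!
Write `y = x + (ρ / ‖G x ω‖) • G x ω` for the SAM point. The step `y - x` has length at most `|ρ|`,
so Lipschitzness gives `‖G y ω - G x ω‖ ≤ L |ρ|`. Splitting `G y ω = (G y ω - G x ω) + (G x ω - h) + h`
and using `‖a + b + c‖² ≤ 3 (‖a‖² + ‖b‖² + ‖c‖²)` bounds `‖G y ω‖²` pointwise by
`3 L² ρ² + 3 ‖G x ω - h‖² + 3 ‖h‖²`; integrating and using the variance bound gives the claim.
Running the splitting backwards shows that the variance integrand is integrable whenever
`‖G y ω‖²` is, so the variance bound really controls `∫ ‖G x ω - h‖²`.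
-/

open MeasureTheory

section Norm

variable {E : Type*} [SeminormedAddCommGroup E]

theorem norm_div_norm_smul_le [NormedSpace ℝ E] (c : ℝ) (v : E) : ‖(c / ‖v‖) • v‖ ≤ |c| := by
  rw [norm_smul, norm_div, norm_norm, Real.norm_eq_abs]
  rcases (norm_nonneg v).eq_or_lt with hv | hv
  · simp [← hv]
  · rw [div_mul_cancel₀ _ hv.ne']

theorem norm_add₃_sq_le (a b c : E) : ‖a + b + c‖ ^ 2 ≤ 3 * (‖a‖ ^ 2 + ‖b‖ ^ 2 + ‖c‖ ^ 2) := by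
  have hsum := norm_add₃_le (a := a) (b := b) (c := c)
  nlinarith [norm_nonneg (a + b + c), sq_nonneg (‖a‖ - ‖b‖), sq_nonneg (‖b‖ - ‖c‖),
    sq_nonneg (‖a‖ - ‖c‖)]

theorem norm_sq_le_of_norm_sub_le {a b c : E} {r : ℝ} (hab : ‖a - b‖ ≤ r) :
    ‖a‖ ^ 2 ≤ 3 * r ^ 2 + 3 * ‖b - c‖ ^ 2 + 3 * ‖c‖ ^ 2 := by
  have hr : ‖a - b‖ ^ 2 ≤ r ^ 2 := pow_le_pow_left₀ (norm_nonneg _) hab 2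
  have hsplit := norm_add₃_sq_le (a - b) (b - c) c
  rw [sub_add_sub_cancel, sub_add_cancel] at hsplit
  linarith

end Norm

theorem integral_le_add_mul_integral_of_ae_le {Ω : Type*} [MeasurableSpace Ω] {μ : Measure Ω}
    [IsProbabilityMeasure μ] {f g : Ω → ℝ} {a b c d : ℝ} (ha : 0 ≤ a) (hc : 0 ≤ c)
    (hg : AEStronglyMeasurable g μ) (hg_nonneg : 0 ≤ᵐ[μ] g)
    (hfg : ∀ᵐ ω ∂μ, f ω ≤ a + c * g ω) (hgf : ∀ᵐ ω ∂μ, g ω ≤ b + d * f ω) :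
    ∫ ω, f ω ∂μ ≤ a + c * ∫ ω, g ω ∂μ := by
  by_cases hf : Integrable f μ
  · have hg_int : Integrable g μ := by
      refine ((integrable_const b).add (hf.const_mul d)).mono' hg ?_
      filter_upwards [hg_nonneg, hgf] with ω hω0 hω
      rwa [Real.norm_of_nonneg hω0]
    calc ∫ ω, f ω ∂μ ≤ ∫ ω, a + c * g ω ∂μ :=
          integral_mono_ae hf ((integrable_const a).add (hg_int.const_mul c)) hfg
      _ = a + c * ∫ ω, g ω ∂μ := by
          rw [integral_add (integrable_const a) (hg_int.const_mul c), integral_const_mul]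
          simp
  · rw [integral_undef hf]
    have := integral_nonneg_of_ae hg_nonneg
    positivity

theorem sam_perturbed_gradient_second_moment_bound_general
    {Ω : Type*} [MeasurableSpace Ω] (μ : Measure Ω) [IsProbabilityMeasure μ]
    (n : ℕ) (L : ℝ) (hL : 0 ≤ L) (ρ : ℝ)
    (σ : ℝ)
    (x h : EuclideanSpace ℝ (Fin n))
    (G : EuclideanSpace ℝ (Fin n) → Ω → EuclideanSpace ℝ (Fin n))
    (hLip : ∀ᵐ ω ∂μ, ∀ u v : EuclideanSpace ℝ (Fin n), ‖G u ω - G v ω‖ ≤ L * ‖u - v‖)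
    (hint : Integrable (fun ω => G x ω) μ)
    (hvar : ∫ ω, ‖G x ω - h‖ ^ 2 ∂μ ≤ σ ^ 2) :
    ∫ ω, ‖G (x + (ρ / ‖G x ω‖) • G x ω) ω‖ ^ 2 ∂μ
      ≤ 12 * ρ ^ 2 * L ^ 2 + 4 * σ ^ 2 + 4 * ‖h‖ ^ 2 := by
  set y := fun ω => x + (ρ / ‖G x ω‖) • G x ω
  have hstep : ∀ᵐ ω ∂μ, ‖G (y ω) ω - G x ω‖ ≤ L * |ρ| := by
    filter_upwards [hLip] with ω hω
    calc ‖G (y ω) ω - G x ω‖ ≤ L * ‖y ω - x‖ := hω _ _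
      _ ≤ L * |ρ| := by
        rw [add_sub_cancel_left]
        exact mul_le_mul_of_nonneg_left (norm_div_norm_smul_le ρ _) hL
  have hbound := integral_le_add_mul_integral_of_ae_le (f := fun ω => ‖G (y ω) ω‖ ^ 2)
    (g := fun ω => ‖G x ω - h‖ ^ 2)
    (a := 3 * (L * |ρ|) ^ 2 + 3 * ‖h‖ ^ 2) (b := 3 * (L * |ρ|) ^ 2 + 3 * ‖h‖ ^ 2)
    (c := 3) (d := 3) (by positivity) (by norm_num)
    ((hint.aestronglyMeasurable.sub aestronglyMeasurable_const).norm.pow 2)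
    (ae_of_all _ fun ω => by positivity)
    (by
      filter_upwards [hstep] with ω hω
      linarith [norm_sq_le_of_norm_sub_le (c := h) hω])
    (by
      filter_upwards [hstep] with ω hω
      rw [← norm_sub_rev, ← sub_sub_sub_cancel_right _ _ h] at hω
      have := norm_sq_le_of_norm_sub_le (c := -h) hω
      rw [sub_neg_eq_add, sub_add_cancel, norm_neg] at this
      linarith)
  refine hbound.trans ?_
  rw [mul_pow, sq_abs]
  nlinarith [sq_nonneg ρ, sq_nonneg L, mul_nonneg (sq_nonneg ρ) (sq_nonneg L), sq_nonneg σ,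
    sq_nonneg ‖h‖]

/-- Second inequality of Lemma 3: under a.s. `L`-Lipschitzness,
a.s. nonvanishing at `x`, unbiasedness `∫ G x ω ∂μ = h`, and bounded variance,
the second moment of the stochastic gradient at the SAM-perturbed point satisfies
`∫ ‖G (x + ρ • G x ω / ‖G x ω‖) ω‖² ∂μ ≤ 12 ρ² L² + 4 σ² + 4 ‖h‖²`. -/
theorem sam_perturbed_gradient_second_moment_bound
    {Ω : Type*} [MeasurableSpace Ω] (μ : Measure Ω) [IsProbabilityMeasure μ]
    (n : ℕ) (hn : 1 ≤ n) (L : ℝ) (hL : 0 ≤ L) (ρ : ℝ) (hρ : 0 < ρ)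
    (σ : ℝ) (hσ : 0 ≤ σ)
    (x h : EuclideanSpace ℝ (Fin n)) (hh : h ≠ 0)
    (G : EuclideanSpace ℝ (Fin n) → Ω → EuclideanSpace ℝ (Fin n))
    (hmeas : Measurable (Function.uncurry G))
    (hLip : ∀ᵐ ω ∂μ, ∀ u v : EuclideanSpace ℝ (Fin n), ‖G u ω - G v ω‖ ≤ L * ‖u - v‖)
    (hne : ∀ᵐ ω ∂μ, G x ω ≠ 0)
    (hint : Integrable (fun ω => G x ω) μ)
    (hunbiased : ∫ ω, G x ω ∂μ = h)
    (hvar : ∫ ω, ‖G x ω - h‖ ^ 2 ∂μ ≤ σ ^ 2) :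
    ∫ ω, ‖G (x + (ρ / ‖G x ω‖) • G x ω) ω‖ ^ 2 ∂μ
      ≤ 12 * ρ ^ 2 * L ^ 2 + 4 * σ ^ 2 + 4 * ‖h‖ ^ 2 :=
  sam_perturbed_gradient_second_moment_bound_general μ n L hL ρ σ x h G hLip hint hvar
end

section
/- Let T ≥ 1 be an integer, β₂ ∈ [0, 1), ε > 0, and σ, ρ, L ≥ 0. Write c = 4σ² + 12ρ²L². Let (g_t)_{t=1}^T and (a_t)_{t=1}^T be real sequences with g_t² ≤ 4a_t² + c for every t. Define v₀ = 0, v_t = β₂·v_{t−1} + (1−β₂)·g_t², and ṽ_t = β₂·v_{t−1} + (1−β₂)·(4a_t² + c) for t = 1, …, T. Then ∑_{t=1}^T √(ṽ_t + ε) ≤ 2σT + (4ρL + √ε)T + 8·∑_{t=1}^T a_t² / √(ṽ_t + ε). -/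
/-!
Write `c = 4σ² + 12ρ²L²` and `E = c + ε`. Since `g_t² ≤ 4a_t² + c`, the sequence `ṽ_t + ε` is
dominated by `W`, the exponential moving average of `E + 4a_t²` started at `W₀ = E`; in particular
`W_t ≥ E`. Splitting `W_t = (β W_{t-1} + (1-β) E) + 4(1-β) a_t²` and dividing by `√W_t` gives
`√W_t ≤ √β √W_{t-1} + (1 - √β) √E + 4(1-β) a_t² / √W_t`; here `W_{t-1} ≥ E` is what bounds
`√(β W_{t-1} + (1-β) E)` by the combination of square roots with weights `√β`, `1 - √β`.
Summing over `t` and absorbing the shifted sum of `√W` on the left leaves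
`(1 - √β) ∑ √W_t ≤ (1 - √β) T √E + 4(1-β) ∑ a_t² / √W_t`, and `1 - β ≤ 2(1 - √β)`.
Finally `√E ≤ 2σ + 4ρL + √ε`.
-/

open Finset

theorem Real.sqrt_add_le_sqrt_add_div_sqrt {p q : ℝ} (hp : 0 ≤ p) (hq : 0 ≤ q) :
    √(p + q) ≤ √p + q / √(p + q) := by
  have hp_div : p / √(p + q) ≤ √p :=
    div_le_of_le_mul₀ (Real.sqrt_nonneg _) (Real.sqrt_nonneg _) <| by
      calc p = √p * √p := (Real.mul_self_sqrt hp).symm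
        _ ≤ √p * √(p + q) := by gcongr; linarith
  calc √(p + q) = p / √(p + q) + q / √(p + q) := by rw [← add_div, Real.div_sqrt]
    _ ≤ √p + q / √(p + q) := by gcongr

theorem Real.sqrt_convex_comb_le {β E x : ℝ} (hβ : 0 ≤ β) (hβ1 : β ≤ 1) (hE : 0 ≤ E)
    (hEx : E ≤ x) : √(β * x + (1 - β) * E) ≤ √β * √x + (1 - √β) * √E := by
  have hu1 : √β ≤ 1 := Real.sqrt_le_one.mpr hβ1
  have hEx' : √E ≤ √x := Real.sqrt_le_sqrt hEx
  refine Real.sqrt_le_iff.mpr ⟨by have := Real.sqrt_nonneg β; positivity, ?_⟩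
  -- the square of the right side exceeds the left side by `2 √β (1 - √β) √E (√x - √E)`
  have hgap : 0 ≤ √β * (1 - √β) * √E * (√x - √E) := by
    have := Real.sqrt_nonneg β; have := Real.sqrt_nonneg E; bound
  nlinarith [Real.sq_sqrt hβ, Real.sq_sqrt hE, Real.sq_sqrt (hE.trans hEx)]

theorem one_sub_mul_sum_range_succ_le {u : ℝ} {s b : ℕ → ℝ} {n : ℕ} (hu : 0 ≤ u)
    (hs : s 0 ≤ s n) (h : ∀ i < n, s (i + 1) ≤ u * s i + b i) :
    (1 - u) * ∑ i ∈ range n, s (i + 1) ≤ ∑ i ∈ range n, b i := by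
  have hshift : ∑ i ∈ range n, s i ≤ ∑ i ∈ range n, s (i + 1) := by
    have := sum_range_succ' s n; have := sum_range_succ s n; linarith
  have hstep : ∑ i ∈ range n, s (i + 1) ≤ u * ∑ i ∈ range n, s i + ∑ i ∈ range n, b i := by
    rw [mul_sum, ← sum_add_distrib]
    exact sum_le_sum fun i hi => h i (mem_range.mp hi)
  nlinarith [mul_le_mul_of_nonneg_left hshift hu]

theorem nonneg_of_mul_le_succ {β : ℝ} {v : ℕ → ℝ} {n : ℕ} (hβ : 0 ≤ β) (h₀ : 0 ≤ v 0)
    (h : ∀ i < n, β * v i ≤ v (i + 1)) : ∀ i ≤ n, 0 ≤ v i := by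
  intro i hi
  induction i with
  | zero => exact h₀
  | succ i ih => exact (mul_nonneg hβ (ih (by omega))).trans (h i hi)

def ema (β x₀ : ℝ) (x : ℕ → ℝ) : ℕ → ℝ
  | 0 => x₀
  | i + 1 => β * ema β x₀ x i + (1 - β) * x (i + 1)

section ema

variable {β x₀ : ℝ} {x : ℕ → ℝ}

theorem le_ema {m : ℝ} (hβ : 0 ≤ β) (hβ1 : β ≤ 1) (h₀ : m ≤ x₀) (hx : ∀ i, m ≤ x i) :
    ∀ i, m ≤ ema β x₀ x i
  | 0 => h₀
  | i + 1 => by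
    have := le_ema hβ hβ1 h₀ hx i
    have := hx (i + 1)
    rw [ema]; nlinarith

theorem le_ema_of_le {w : ℕ → ℝ} {n : ℕ} (hβ : 0 ≤ β) (h₀ : w 0 ≤ x₀)
    (hw : ∀ i < n, w (i + 1) ≤ β * w i + (1 - β) * x (i + 1)) :
    ∀ i ≤ n, w i ≤ ema β x₀ x i := by
  intro i hi
  induction i with
  | zero => exact h₀
  | succ i ih =>
    rw [ema]
    exact (hw i hi).trans (by gcongr; exact ih (by omega))

end ema

section majorant

variable {β E : ℝ} (a : ℕ → ℝ)

local notation "W" => ema β E (fun t => E + 4 * a t ^ 2)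

theorem le_ema_add_sq (hβ : 0 ≤ β) (hβ1 : β ≤ 1) (i : ℕ) : E ≤ W i :=
  le_ema hβ hβ1 le_rfl (fun _ => le_add_of_nonneg_right (by positivity)) i

theorem sqrt_ema_succ_le (hβ : 0 ≤ β) (hβ1 : β ≤ 1) (hE : 0 ≤ E) (i : ℕ) :
    √(W (i + 1))
      ≤ √β * √(W i) + (1 - √β) * √E + 4 * (1 - β) * (a (i + 1) ^ 2 / √(W (i + 1))) := by
  have hW : (β * W i + (1 - β) * E) + 4 * (1 - β) * a (i + 1) ^ 2 = W (i + 1) := by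
    rw [ema]; ring
  have hWE : E ≤ W i := le_ema_add_sq a hβ hβ1 i
  have h := Real.sqrt_add_le_sqrt_add_div_sqrt (p := β * W i + (1 - β) * E)
    (q := 4 * (1 - β) * a (i + 1) ^ 2) (by nlinarith) (by nlinarith [sq_nonneg (a (i + 1))])
  rw [hW] at h
  calc √(W (i + 1))
      ≤ √(β * W i + (1 - β) * E) + 4 * (1 - β) * a (i + 1) ^ 2 / √(W (i + 1)) := h
    _ ≤ _ := by
        rw [mul_div_assoc]
        gcongr
        exact Real.sqrt_convex_comb_le hβ hβ1 hE hWE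

theorem sum_sqrt_ema_le (hβ : 0 ≤ β) (hβ1 : β < 1) (hE : 0 ≤ E) (n : ℕ) :
    ∑ i ∈ range n, √(W (i + 1))
      ≤ n * √E + 8 * ∑ i ∈ range n, a (i + 1) ^ 2 / √(W (i + 1)) := by
  set Q := ∑ i ∈ range n, a (i + 1) ^ 2 / √(W (i + 1))
  have hQ : 0 ≤ Q := sum_nonneg fun i _ => by positivity
  have hu : 0 ≤ √β := Real.sqrt_nonneg β
  have hu1 : √β < 1 := (Real.sqrt_lt' one_pos).mpr (by linarith)
  have hs : √(W 0) ≤ √(W n) := Real.sqrt_le_sqrt (le_ema_add_sq a hβ hβ1.le n)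
  have key := one_sub_mul_sum_range_succ_le (s := fun i => √(W i))
    (b := fun i => (1 - √β) * √E + 4 * (1 - β) * (a (i + 1) ^ 2 / √(W (i + 1)))) hu hs
    fun i _ => (sqrt_ema_succ_le a hβ hβ1.le hE i).trans_eq (add_assoc _ _ _)
  simp only [sum_add_distrib, sum_const, card_range, nsmul_eq_mul, ← mul_sum] at key
  -- dividing by `1 - √β` turns the factor `1 - β = (1 - √β) (1 + √β)` into `1 + √β ≤ 2`
  have : (1 - √β) * ∑ i ∈ range n, √(W (i + 1)) ≤ (1 - √β) * (n * √E + 4 * (1 + √β) * Q) := by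
    nlinarith [Real.sq_sqrt hβ]
  have := le_of_mul_le_mul_left this (by linarith)
  nlinarith

end majorant

theorem sum_sqrt_le_of_le_ema {β E : ℝ} {a x : ℕ → ℝ} {n : ℕ} (hβ : 0 ≤ β) (hβ1 : β < 1)
    (hE : 0 ≤ E) (hx : ∀ i < n, 0 < x (i + 1))
    (hxW : ∀ i < n, x (i + 1) ≤ ema β E (fun t => E + 4 * a t ^ 2) (i + 1)) :
    ∑ i ∈ range n, √(x (i + 1)) ≤ n * √E + 8 * ∑ i ∈ range n, a (i + 1) ^ 2 / √(x (i + 1)) :=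
  calc ∑ i ∈ range n, √(x (i + 1))
      ≤ ∑ i ∈ range n, √(ema β E (fun t => E + 4 * a t ^ 2) (i + 1)) :=
        sum_le_sum fun i hi => Real.sqrt_le_sqrt (hxW i (mem_range.mp hi))
    _ ≤ n * √E
          + 8 * ∑ i ∈ range n, a (i + 1) ^ 2 / √(ema β E (fun t => E + 4 * a t ^ 2) (i + 1)) :=
        sum_sqrt_ema_le a hβ hβ1 hE n
    _ ≤ n * √E + 8 * ∑ i ∈ range n, a (i + 1) ^ 2 / √(x (i + 1)) := by
        gcongr with i hi
        · exact Real.sqrt_pos.mpr (hx i (mem_range.mp hi))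
        · exact hxW i (mem_range.mp hi)

theorem sum_Icc_one_eq_sum_range {M : Type*} [AddCommMonoid M] (f : ℕ → M) (n : ℕ) :
    ∑ t ∈ Icc 1 n, f t = ∑ i ∈ range n, f (i + 1) := by
  rw [range_eq_Ico, sum_Ico_add']
  rfl

theorem sqrt_four_sq_add_twelve_sq_mul_sq_add_le {σ ρ L ε : ℝ} (hσ : 0 ≤ σ) (hρ : 0 ≤ ρ)
    (hL : 0 ≤ L) (hε : 0 ≤ ε) :
    √(4 * σ ^ 2 + 12 * ρ ^ 2 * L ^ 2 + ε) ≤ 2 * σ + 4 * ρ * L + √ε := by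
  have := Real.sqrt_nonneg ε
  have hρL := mul_nonneg hρ hL
  refine Real.sqrt_le_iff.mpr ⟨by positivity, ?_⟩
  nlinarith [Real.sq_sqrt hε, mul_nonneg hσ hρL, mul_nonneg hσ this, mul_nonneg hρL this]

theorem adamw_surrogate_second_moment_sum_bound_general
    (T : ℕ)
    (β₂ : ℝ) (hβ₂ : 0 ≤ β₂) (hβ₂' : β₂ < 1)
    (ε : ℝ) (hε : 0 < ε)
    (σ ρ L : ℝ) (hσ : 0 ≤ σ) (hρ : 0 ≤ ρ) (hL : 0 ≤ L)
    (g a v vtil : ℕ → ℝ)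
    (hg : ∀ t ∈ Finset.Icc 1 T, (g t) ^ 2 ≤ 4 * (a t) ^ 2 + (4 * σ ^ 2 + 12 * ρ ^ 2 * L ^ 2))
    (hv0 : v 0 = 0)
    (hv : ∀ t ∈ Finset.Icc 1 T, v t = β₂ * v (t - 1) + (1 - β₂) * (g t) ^ 2)
    (hvtil : ∀ t ∈ Finset.Icc 1 T,
      vtil t = β₂ * v (t - 1) + (1 - β₂) * (4 * (a t) ^ 2 + (4 * σ ^ 2 + 12 * ρ ^ 2 * L ^ 2))) :
    ∑ t ∈ Finset.Icc 1 T, Real.sqrt (vtil t + ε)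
      ≤ 2 * σ * T + (4 * ρ * L + Real.sqrt ε) * T
        + 8 * ∑ t ∈ Finset.Icc 1 T, (a t) ^ 2 / Real.sqrt (vtil t + ε) := by
  set c := 4 * σ ^ 2 + 12 * ρ ^ 2 * L ^ 2
  have hc : 0 ≤ c := by positivity
  have hmem : ∀ i < T, i + 1 ∈ Icc 1 T := fun i hi => mem_Icc.mpr ⟨by omega, hi⟩
  have hv' : ∀ i < T, v (i + 1) = β₂ * v i + (1 - β₂) * g (i + 1) ^ 2 := fun i hi => by
    simpa using hv (i + 1) (hmem i hi)
  have hvtil' : ∀ i < T, vtil (i + 1) = β₂ * v i + (1 - β₂) * (4 * a (i + 1) ^ 2 + c) :=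
    fun i hi => by simpa using hvtil (i + 1) (hmem i hi)
  have hv_nonneg := nonneg_of_mul_le_succ hβ₂ hv0.ge fun i hi => by
    rw [hv' i hi]; nlinarith [sq_nonneg (g (i + 1))]
  have hvW := le_ema_of_le (w := fun i => v i + ε) (x₀ := c + ε)
    (x := fun t => c + ε + 4 * a t ^ 2) hβ₂ (by linarith) fun i hi => by
      rw [hv' i hi]; nlinarith [hg (i + 1) (hmem i hi)]
  have key := sum_sqrt_le_of_le_ema (E := c + ε) (a := a) (x := fun t => vtil t + ε) hβ₂ hβ₂'
    (by positivity)
    (fun i hi => by rw [hvtil' i hi]; nlinarith [hv_nonneg i hi.le, sq_nonneg (a (i + 1))])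
    (fun i hi => by rw [hvtil' i hi, ema]; nlinarith [hvW i hi.le])
  rw [sum_Icc_one_eq_sum_range, sum_Icc_one_eq_sum_range]
  calc _ ≤ T * √(c + ε) + 8 * ∑ i ∈ range T, a (i + 1) ^ 2 / √(vtil (i + 1) + ε) := key
    _ ≤ _ := by
      have := sqrt_four_sq_add_twelve_sq_mul_sq_add_le hσ hρ hL hε.le
      nlinarith

/-- Deterministic per-coordinate form of Lemma 4: with the AdamW
second-moment recursion `v_t = β₂ v_{t-1} + (1-β₂) g_t²` (from `v₀ = 0`), the surrogate
`ṽ_t = β₂ v_{t-1} + (1-β₂)(4 a_t² + c)` where `c = 4σ² + 12ρ²L²`, and the bound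
`g_t² ≤ 4 a_t² + c`, one has
`∑ √(ṽ_t+ε) ≤ 2σT + (4ρL + √ε)T + 8 ∑ a_t² / √(ṽ_t+ε)`. -/
theorem adamw_surrogate_second_moment_sum_bound
    (T : ℕ) (hT : 1 ≤ T)
    (β₂ : ℝ) (hβ₂ : 0 ≤ β₂) (hβ₂' : β₂ < 1)
    (ε : ℝ) (hε : 0 < ε)
    (σ ρ L : ℝ) (hσ : 0 ≤ σ) (hρ : 0 ≤ ρ) (hL : 0 ≤ L)
    (g a v vtil : ℕ → ℝ)
    (hg : ∀ t ∈ Finset.Icc 1 T, (g t) ^ 2 ≤ 4 * (a t) ^ 2 + (4 * σ ^ 2 + 12 * ρ ^ 2 * L ^ 2))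
    (hv0 : v 0 = 0)
    (hv : ∀ t ∈ Finset.Icc 1 T, v t = β₂ * v (t - 1) + (1 - β₂) * (g t) ^ 2)
    (hvtil : ∀ t ∈ Finset.Icc 1 T,
      vtil t = β₂ * v (t - 1) + (1 - β₂) * (4 * (a t) ^ 2 + (4 * σ ^ 2 + 12 * ρ ^ 2 * L ^ 2))) :
    ∑ t ∈ Finset.Icc 1 T, Real.sqrt (vtil t + ε)
      ≤ 2 * σ * T + (4 * ρ * L + Real.sqrt ε) * T
        + 8 * ∑ t ∈ Finset.Icc 1 T, (a t) ^ 2 / Real.sqrt (vtil t + ε) :=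
  adamw_surrogate_second_moment_sum_bound_general T β₂ hβ₂ hβ₂' ε hε σ ρ L hσ hρ hL g a v vtil hg
    hv0 hv hvtil
end

section
/- Let d ≥ 1, let f : ℝᵈ → ℝ be differentiable and coordinate-wise L-smooth for some L ≥ 0, fix a coordinate i ∈ {1, …, d}, and let η > 0, λ ≥ 0, ε > 0, β₁ ∈ (0, 1), σ ≥ 0, ρ ≥ 0. Set θ = ⌈1/(1 − β₁^{5/4})⌉. Let (Ω, μ) be a probability space carrying random vectors X, X′ : Ω → ℝᵈ and real random variables M, G, V with V ≥ 0 almost surely, such that almost surely X′_i = X_i − η·(M + λ·X_i·√(V + ε))/√(V + ε), and such that all the squared quantities appearing below are integrable. Define M′ = β₁·M + (1 − β₁)·G, and assume E[(G − ∂_i f(X′))²] ≤ 4σ² + 12ρ²L². Then E[(M′ − ∂_i f(X′))²] ≤ √β₁ · E[(M − ∂_i f(X))²] + (β₁^{3/4}·η²·L² / ((1 − β₁^{1/4})·√ε)) · E[(M + λ·X_i·√(V + ε))² / √(V + ε)] + θ·(1 − β₁)²·(4σ² + 12ρ²L²). -/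
/-!
Write `β₁ = t⁴` and `δ = ∂ᵢf(X)`, `δ' = ∂ᵢf(X')`. Pointwise,
`M' - δ' = β₁ (M - δ) + β₁ (δ - δ') + (1 - β₁) (G - δ')`, and Cauchy–Schwarz with the weights
`t⁶ + t⁵ (1 - t) + (1 - t⁵) = 1` turns the square of this sum into the three terms of the
recursion. Coordinate-wise smoothness bounds `(δ - δ')²` by `L² (X'ᵢ - Xᵢ)²`, where the step is
`η (M + λ Xᵢ √(V + ε)) / √(V + ε)` and `√(V + ε) ≥ √ε`. Integrating, the noise coefficient
`(1 - t⁵)⁻¹` is at most its ceiling `θ`.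
-/

open MeasureTheory

lemma sq_add_add_le_div_add_div_add_div (a b c : ℝ) {p q r : ℝ} (hp : 0 < p) (hq : 0 < q)
    (hr : 0 < r) (hpqr : p + q + r = 1) :
    (a + b + c) ^ 2 ≤ a ^ 2 / p + b ^ 2 / q + c ^ 2 / r := by
  have h := Finset.sq_sum_div_le_sum_sq_div Finset.univ ![a, b, c] (g := ![p, q, r])
    (by simp [Fin.forall_fin_succ, hp, hq, hr])
  simpa [Fin.sum_univ_three, hpqr] using h

lemma pow_four_rpow_div_four {t : ℝ} (ht : 0 ≤ t) (k : ℝ) : (t ^ 4) ^ (k / 4) = t ^ k := by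
  rw [← Real.rpow_natCast, ← Real.rpow_mul ht]
  congr 1
  ring

lemma sq_momentum_error_le {t : ℝ} (ht0 : 0 < t) (ht1 : t < 1) (m g δ δ' : ℝ) :
    (t ^ 4 * m + (1 - t ^ 4) * g - δ') ^ 2
      ≤ t ^ 2 * (m - δ) ^ 2 + t ^ 3 / (1 - t) * (δ' - δ) ^ 2
        + (1 - t ^ 5)⁻¹ * (1 - t ^ 4) ^ 2 * (g - δ') ^ 2 := by
  have h1t : 0 < 1 - t := by linarith
  have h1t5 : 0 < 1 - t ^ 5 := by linarith [pow_lt_one₀ ht0.le ht1 (n := 5) (by norm_num)]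
  have h := sq_add_add_le_div_add_div_add_div
    (t ^ 4 * (m - δ)) (t ^ 4 * (δ - δ')) ((1 - t ^ 4) * (g - δ'))
    (by positivity : 0 < t ^ 6) (mul_pos (pow_pos ht0 5) h1t) h1t5 (by ring)
  convert h using 1
  · ring
  · field_simp
    ring

lemma sq_sub_le_of_adamW_step {η L ε S a x x' δ δ' : ℝ} (hε : 0 < ε) (hS : √ε ≤ S)
    (hstep : x' = x - η * a / S) (hlip : |δ' - δ| ≤ L * |x' - x|) :
    (δ' - δ) ^ 2 ≤ η ^ 2 * L ^ 2 / √ε * (a ^ 2 / S) := by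
  have hε' : 0 < √ε := Real.sqrt_pos.2 hε
  have hSpos : 0 < S := hε'.trans_le hS
  calc (δ' - δ) ^ 2 = |δ' - δ| ^ 2 := (sq_abs _).symm
    _ ≤ (L * |x' - x|) ^ 2 := by gcongr
    _ = η ^ 2 * L ^ 2 * (a ^ 2 / S) / S := by
      rw [hstep, mul_pow, sq_abs]
      field_simp
      ring
    _ ≤ η ^ 2 * L ^ 2 * (a ^ 2 / S) / √ε := by gcongr
    _ = η ^ 2 * L ^ 2 / √ε * (a ^ 2 / S) := by ring

lemma sq_momentum_error_le_of_adamW_step {t η L ε V m g a x x' δ δ' : ℝ} (ht0 : 0 < t)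
    (ht1 : t < 1) (hε : 0 < ε) (hV : 0 ≤ V) (hstep : x' = x - η * a / √(V + ε))
    (hlip : |δ' - δ| ≤ L * |x' - x|) :
    (t ^ 4 * m + (1 - t ^ 4) * g - δ') ^ 2
      ≤ t ^ 2 * (m - δ) ^ 2 + t ^ 3 * η ^ 2 * L ^ 2 / ((1 - t) * √ε) * (a ^ 2 / √(V + ε))
        + (1 - t ^ 5)⁻¹ * (1 - t ^ 4) ^ 2 * (g - δ') ^ 2 := by
  have hgrad := sq_sub_le_of_adamW_step hε (Real.sqrt_le_sqrt (by linarith)) hstep hlip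
  have h1t : 0 < 1 - t := by linarith
  calc _ ≤ _ := sq_momentum_error_le ht0 ht1 m g δ δ'
    _ ≤ t ^ 2 * (m - δ) ^ 2 + t ^ 3 / (1 - t) * (η ^ 2 * L ^ 2 / √ε * (a ^ 2 / √(V + ε)))
        + (1 - t ^ 5)⁻¹ * (1 - t ^ 4) ^ 2 * (g - δ') ^ 2 := by
      gcongr
    _ = _ := by field_simp

lemma integral_le_of_ae_le_add_add {Ω : Type*} [MeasurableSpace Ω] {μ : Measure Ω}
    {F f₁ f₂ f₃ : Ω → ℝ} {c₁ c₂ c₃ : ℝ} (hF : ∀ᵐ ω ∂μ, 0 ≤ F ω) (h₁ : Integrable f₁ μ)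
    (h₂ : Integrable f₂ μ) (h₃ : Integrable f₃ μ)
    (h : ∀ᵐ ω ∂μ, F ω ≤ c₁ * f₁ ω + c₂ * f₂ ω + c₃ * f₃ ω) :
    ∫ ω, F ω ∂μ ≤ c₁ * ∫ ω, f₁ ω ∂μ + c₂ * ∫ ω, f₂ ω ∂μ + c₃ * ∫ ω, f₃ ω ∂μ := by
  have h₁₂ : Integrable (fun ω => c₁ * f₁ ω + c₂ * f₂ ω) μ :=
    (h₁.const_mul c₁).add (h₂.const_mul c₂)
  have hg : Integrable (fun ω => c₁ * f₁ ω + c₂ * f₂ ω + c₃ * f₃ ω) μ :=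
    h₁₂.add (h₃.const_mul c₃)
  refine (integral_mono_of_nonneg hF hg h).trans_eq ?_
  rw [integral_add h₁₂ (h₃.const_mul c₃), integral_add (h₁.const_mul c₁) (h₂.const_mul c₂),
    integral_const_mul, integral_const_mul, integral_const_mul]

theorem momentum_error_recursion_general
    {Ω : Type*} [MeasurableSpace Ω] (μ : Measure Ω)
    (d : ℕ)
    (f : EuclideanSpace ℝ (Fin d) → ℝ) (L : ℝ)
    (hsmooth : ∀ (j : Fin d) (x y : EuclideanSpace ℝ (Fin d)),
      |fderiv ℝ f x (EuclideanSpace.single j 1) - fderiv ℝ f y (EuclideanSpace.single j 1)|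
        ≤ L * |x j - y j|)
    (i : Fin d)
    (η lam ε β₁ σ ρ : ℝ) (hε : 0 < ε)
    (hβ₁ : 0 < β₁) (hβ₁' : β₁ < 1)
    (X X' : Ω → EuclideanSpace ℝ (Fin d)) (M G V : Ω → ℝ)
    (hV : ∀ᵐ ω ∂μ, 0 ≤ V ω)
    (hstep : ∀ᵐ ω ∂μ,
      X' ω i = X ω i - η * (M ω + lam * X ω i * Real.sqrt (V ω + ε)) / Real.sqrt (V ω + ε))
    (hint2 : Integrable (fun ω =>
      (M ω - fderiv ℝ f (X ω) (EuclideanSpace.single i 1)) ^ 2) μ)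
    (hint3 : Integrable (fun ω =>
      (M ω + lam * X ω i * Real.sqrt (V ω + ε)) ^ 2 / Real.sqrt (V ω + ε)) μ)
    (hint4 : Integrable (fun ω =>
      (G ω - fderiv ℝ f (X' ω) (EuclideanSpace.single i 1)) ^ 2) μ)
    (hG : ∫ ω, (G ω - fderiv ℝ f (X' ω) (EuclideanSpace.single i 1)) ^ 2 ∂μ
      ≤ 4 * σ ^ 2 + 12 * ρ ^ 2 * L ^ 2) :
    ∫ ω, (β₁ * M ω + (1 - β₁) * G ω - fderiv ℝ f (X' ω) (EuclideanSpace.single i 1)) ^ 2 ∂μ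
      ≤ Real.sqrt β₁ * ∫ ω, (M ω - fderiv ℝ f (X ω) (EuclideanSpace.single i 1)) ^ 2 ∂μ
        + (β₁ ^ ((3 : ℝ) / 4) * η ^ 2 * L ^ 2 / ((1 - β₁ ^ ((1 : ℝ) / 4)) * Real.sqrt ε))
            * ∫ ω, (M ω + lam * X ω i * Real.sqrt (V ω + ε)) ^ 2 / Real.sqrt (V ω + ε) ∂μ
        + (⌈(1 - β₁ ^ ((5 : ℝ) / 4))⁻¹⌉₊ : ℝ) * (1 - β₁) ^ 2
            * (4 * σ ^ 2 + 12 * ρ ^ 2 * L ^ 2) := by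
  obtain ⟨t, ht0, ht1, rfl⟩ : ∃ t, 0 < t ∧ t < 1 ∧ β₁ = t ^ 4 :=
    ⟨β₁ ^ ((4 : ℕ)⁻¹ : ℝ), Real.rpow_pos_of_pos hβ₁ _,
      Real.rpow_lt_one hβ₁.le hβ₁' (by norm_num),
      (Real.rpow_inv_natCast_pow hβ₁.le four_ne_zero).symm⟩
  have hsqrt : √(t ^ 4) = t ^ 2 := by
    rw [show t ^ 4 = (t ^ 2) ^ 2 by ring, Real.sqrt_sq (by positivity)]
  simp only [hsqrt, pow_four_rpow_div_four ht0.le, Real.rpow_ofNat, Real.rpow_one]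
  refine (integral_le_of_ae_le_add_add (c₁ := t ^ 2)
    (c₂ := t ^ 3 * η ^ 2 * L ^ 2 / ((1 - t) * √ε)) (c₃ := (1 - t ^ 5)⁻¹ * (1 - t ^ 4) ^ 2)
    (ae_of_all _ fun _ => sq_nonneg _) hint2 hint3 hint4 ?_).trans ?_
  · filter_upwards [hV, hstep] with ω hVω hstepω
    exact sq_momentum_error_le_of_adamW_step ht0 ht1 hε hVω hstepω (hsmooth i _ _)
  · gcongr
    exact Nat.le_ceil _

/-- Lemma 5 of the paper: one-step recursion for the momentum tracking
error of AdamW combined with SAM, stated for the `i`-th coordinate. With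
`M' = β₁ M + (1-β₁) G`, `X'_i = X_i - η (M + λ X_i √(V+ε)) / √(V+ε)` a.s., and
`E[(G - ∂ᵢf(X'))²] ≤ 4σ² + 12ρ²L²`, we get
`E[(M' - ∂ᵢf(X'))²] ≤ √β₁ E[(M - ∂ᵢf(X))²]
  + (β₁^{3/4} η² L² / ((1-β₁^{1/4})√ε)) E[(M + λ Xᵢ √(V+ε))² / √(V+ε)]
  + θ (1-β₁)² (4σ² + 12ρ²L²)` where `θ = ⌈1/(1-β₁^{5/4})⌉`. -/
theorem momentum_error_recursion
    {Ω : Type*} [MeasurableSpace Ω] (μ : Measure Ω) [IsProbabilityMeasure μ]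
    (d : ℕ) (hd : 1 ≤ d)
    (f : EuclideanSpace ℝ (Fin d) → ℝ) (L : ℝ) (hL : 0 ≤ L)
    (hdiff : Differentiable ℝ f)
    (hsmooth : ∀ (j : Fin d) (x y : EuclideanSpace ℝ (Fin d)),
      |fderiv ℝ f x (EuclideanSpace.single j 1) - fderiv ℝ f y (EuclideanSpace.single j 1)|
        ≤ L * |x j - y j|)
    (i : Fin d)
    (η lam ε β₁ σ ρ : ℝ) (hη : 0 < η) (hlam : 0 ≤ lam) (hε : 0 < ε)
    (hβ₁ : 0 < β₁) (hβ₁' : β₁ < 1) (hσ : 0 ≤ σ) (hρ : 0 ≤ ρ)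
    (X X' : Ω → EuclideanSpace ℝ (Fin d)) (M G V : Ω → ℝ)
    (hV : ∀ᵐ ω ∂μ, 0 ≤ V ω)
    (hstep : ∀ᵐ ω ∂μ,
      X' ω i = X ω i - η * (M ω + lam * X ω i * Real.sqrt (V ω + ε)) / Real.sqrt (V ω + ε))
    (hint1 : Integrable (fun ω =>
      (β₁ * M ω + (1 - β₁) * G ω - fderiv ℝ f (X' ω) (EuclideanSpace.single i 1)) ^ 2) μ)
    (hint2 : Integrable (fun ω =>
      (M ω - fderiv ℝ f (X ω) (EuclideanSpace.single i 1)) ^ 2) μ)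
    (hint3 : Integrable (fun ω =>
      (M ω + lam * X ω i * Real.sqrt (V ω + ε)) ^ 2 / Real.sqrt (V ω + ε)) μ)
    (hint4 : Integrable (fun ω =>
      (G ω - fderiv ℝ f (X' ω) (EuclideanSpace.single i 1)) ^ 2) μ)
    (hG : ∫ ω, (G ω - fderiv ℝ f (X' ω) (EuclideanSpace.single i 1)) ^ 2 ∂μ
      ≤ 4 * σ ^ 2 + 12 * ρ ^ 2 * L ^ 2) :
    ∫ ω, (β₁ * M ω + (1 - β₁) * G ω - fderiv ℝ f (X' ω) (EuclideanSpace.single i 1)) ^ 2 ∂μ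
      ≤ Real.sqrt β₁ * ∫ ω, (M ω - fderiv ℝ f (X ω) (EuclideanSpace.single i 1)) ^ 2 ∂μ
        + (β₁ ^ ((3 : ℝ) / 4) * η ^ 2 * L ^ 2 / ((1 - β₁ ^ ((1 : ℝ) / 4)) * Real.sqrt ε))
            * ∫ ω, (M ω + lam * X ω i * Real.sqrt (V ω + ε)) ^ 2 / Real.sqrt (V ω + ε) ∂μ
        + (⌈(1 - β₁ ^ ((5 : ℝ) / 4))⁻¹⌉₊ : ℝ) * (1 - β₁) ^ 2
            * (4 * σ ^ 2 + 12 * ρ ^ 2 * L ^ 2) :=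
  momentum_error_recursion_general μ d f L hsmooth i η lam ε β₁ σ ρ hε hβ₁ hβ₁' X X' M G V hV hstep
    hint2 hint3 hint4 hG
end

section
/- Let T ≥ 1 be an integer, d ≥ 1, η > 0, λ > 0, ε > 0, and ν > 0 with √ν / T^{1/4} < 1. Let x_1, …, x_T ∈ ℝᵈ and, for each t ∈ {1, …, T−1} and each coordinate i ∈ {1, …, d}, let m_{t,i} ∈ ℝ and v_{t,i} ≥ 0 satisfy m_{t,i}² ≤ 8·(v_{t,i} + ε), and suppose that either x_{t+1,i} = x_{t,i} (the coordinate is frozen) or x_{t+1,i} = x_{t,i} − η·m_{t,i}/√(v_{t,i} + ε) − η·λ·x_{t,i} (the coordinate is updated). If η·λ ≤ √ν/(5·T^{5/4}) and λ·‖x_1‖_∞ ≤ √ν/(4·T^{1/4}), then λ·‖x_t‖_∞ ≤ √ν/T^{1/4} for every t ∈ {1, …, T}. -/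
/-!
Since `m² ≤ 9 (v + ε)`, the normalized momentum `m / √(v + ε)` has absolute value at most `3`;
as `0 ≤ ηλ ≤ 2`, the decay factor `1 - ηλ` is a contraction, so each step, frozen or not,
moves every coordinate by at most `3η` in absolute value beyond `|x_{t,i}|`. Hence
`λ‖x_t‖_∞ ≤ λ‖x_1‖_∞ + 3Tηλ ≤ √ν/(4T^{1/4}) + 3√ν/(5T^{1/4}) ≤ √ν/T^{1/4}`.
-/

lemma abs_div_sqrt_le_of_sq_le {a b c : ℝ} (hc : 0 ≤ c) (h : a ^ 2 ≤ c ^ 2 * b) :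
    |a / √b| ≤ c := by
  rcases le_or_gt b 0 with hb | hb
  · simpa [Real.sqrt_eq_zero'.mpr hb] using hc
  rw [abs_div, abs_of_pos (Real.sqrt_pos.mpr hb), div_le_iff₀ (Real.sqrt_pos.mpr hb)]
  calc |a| = √(a ^ 2) := (Real.sqrt_sq_eq_abs a).symm
    _ ≤ √(c ^ 2 * b) := Real.sqrt_le_sqrt h
    _ = c * √b := by rw [Real.sqrt_mul (sq_nonneg c), Real.sqrt_sq hc]

lemma abs_sub_sub_mul_le {x g η κ G : ℝ} (hη : 0 ≤ η) (hκ₀ : 0 ≤ κ) (hκ₂ : κ ≤ 2)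
    (hg : |g| ≤ G) : |x - η * g - κ * x| ≤ |x| + η * G := by
  have hcontr : |1 - κ| ≤ 1 := abs_le.mpr ⟨by linarith, by linarith⟩
  calc |x - η * g - κ * x| = |(1 - κ) * x - η * g| := by ring_nf
    _ ≤ |1 - κ| * |x| + η * |g| := by
        rw [← abs_mul, ← abs_of_nonneg hη, ← abs_mul, abs_of_nonneg hη]; exact abs_sub _ _
    _ ≤ |x| + η * G := by
        gcongr
        exact mul_le_of_le_one_left (abs_nonneg x) hcontr

lemma norm_sparse_adamw_step_le {ι : Type*} [Fintype ι] {η lam ε : ℝ} {x x' m v : ι → ℝ}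
    (hη : 0 ≤ η) (hκ₀ : 0 ≤ η * lam) (hκ₂ : η * lam ≤ 2)
    (hm : ∀ i, m i ^ 2 ≤ 8 * (v i + ε))
    (hstep : ∀ i, x' i = x i ∨ x' i = x i - η * m i / √(v i + ε) - η * lam * x i) :
    ‖x'‖ ≤ ‖x‖ + 3 * η := by
  refine (pi_norm_le_iff_of_nonneg (by positivity)).mpr fun i ↦ ?_
  have hxi : ‖x i‖ ≤ ‖x‖ := norm_le_pi_norm x i
  rcases hstep i with hfrozen | hupdated
  · rw [hfrozen]; linarith
  · have hnormalized : |m i / √(v i + ε)| ≤ 3 :=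
      abs_div_sqrt_le_of_sq_le (by norm_num) (by nlinarith [hm i, sq_nonneg (m i)])
    have := abs_sub_sub_mul_le (x := x i) hη hκ₀ hκ₂ hnormalized
    rw [hupdated, Real.norm_eq_abs, mul_div_assoc]
    rw [Real.norm_eq_abs] at hxi
    linarith

lemma le_add_mul_of_succ_le_add {f : ℕ → ℝ} {a b : ℕ} {c : ℝ}
    (h : ∀ k, a ≤ k → k < b → f (k + 1) ≤ f k + c) :
    ∀ n, a + n ≤ b → f (a + n) ≤ f a + n * c := by
  intro n
  induction n with
  | zero => simp
  | succ n ih =>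
    intro hn
    have := h (a + n) (by omega) (by omega)
    rw [← add_assoc]
    push_cast
    linarith [ih (by omega)]

theorem sparse_adamw_iterate_bound_general
    (T : ℕ) (d : ℕ)
    (η lam ε ν : ℝ) (hη : 0 < η) (hlam : 0 < lam)
    (hν' : Real.sqrt ν / (T : ℝ) ^ ((1 : ℝ) / 4) < 1)
    (x : ℕ → Fin d → ℝ) (m v : ℕ → Fin d → ℝ)
    (hm : ∀ t ∈ Finset.Icc 1 (T - 1), ∀ i, (m t i) ^ 2 ≤ 8 * (v t i + ε))
    (hstep : ∀ t ∈ Finset.Icc 1 (T - 1), ∀ i,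
      x (t + 1) i = x t i ∨
      x (t + 1) i = x t i - η * m t i / Real.sqrt (v t i + ε) - η * lam * x t i)
    (hηlam : η * lam ≤ Real.sqrt ν / (5 * (T : ℝ) ^ ((5 : ℝ) / 4)))
    (hx1 : lam * ‖x 1‖ ≤ Real.sqrt ν / (4 * (T : ℝ) ^ ((1 : ℝ) / 4))) :
    ∀ t ∈ Finset.Icc 1 T, lam * ‖x t‖ ≤ Real.sqrt ν / (T : ℝ) ^ ((1 : ℝ) / 4) := by
  intro t ht
  obtain ⟨ht₁, htT⟩ := Finset.mem_Icc.mp ht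
  set A := (T : ℝ) ^ ((1 : ℝ) / 4)
  have hT : (1 : ℝ) ≤ T := by exact_mod_cast ht₁.trans htT
  have hA : 0 < A := by positivity
  have hT54 : (T : ℝ) ^ ((5 : ℝ) / 4) = T * A := by
    rw [show (5 : ℝ) / 4 = 1 + 1 / 4 by norm_num, Real.rpow_add (by positivity), Real.rpow_one]
  rw [hT54] at hηlam
  have hstep_sum : 3 * T * (η * lam) ≤ 3 / 5 * (√ν / A) := by
    calc 3 * T * (η * lam) ≤ 3 * T * (√ν / (5 * (T * A))) := by gcongr
      _ = 3 / 5 * (√ν / A) := by field_simp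
  have hκ₂ : η * lam ≤ 2 := by
    nlinarith [(div_lt_one hA).mp hν', mul_pos hη hlam]
  have hgrowth := le_add_mul_of_succ_le_add (f := fun k ↦ ‖x k‖) (a := 1) (b := T) (c := 3 * η)
    (fun k hk₁ hkT ↦ norm_sparse_adamw_step_le hη.le (by positivity) hκ₂
      (hm k (Finset.mem_Icc.mpr ⟨hk₁, by omega⟩)) (hstep k (Finset.mem_Icc.mpr ⟨hk₁, by omega⟩)))
    (t - 1) (by omega)
  rw [show 1 + (t - 1) = t by omega] at hgrowth
  have ht_sub : ((t - 1 : ℕ) : ℝ) ≤ T := by exact_mod_cast (t.sub_le 1).trans htT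
  have hx1' : lam * ‖x 1‖ ≤ 1 / 4 * (√ν / A) := by
    rwa [show √ν / (4 * A) = 1 / 4 * (√ν / A) by ring] at hx1
  calc lam * ‖x t‖ ≤ lam * (‖x 1‖ + ((t - 1 : ℕ) : ℝ) * (3 * η)) :=
        mul_le_mul_of_nonneg_left hgrowth hlam.le
    _ ≤ lam * ‖x 1‖ + 3 * T * (η * lam) := by nlinarith [mul_pos hη hlam]
    _ ≤ 1 / 4 * (√ν / A) + 3 / 5 * (√ν / A) := add_le_add hx1' hstep_sum
    _ ≤ √ν / A := by linarith [div_nonneg (Real.sqrt_nonneg ν) hA.le]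

/-- Lemma 2 of the paper (iterate boundedness for sparse AdamW).
Here `x t : Fin d → ℝ` and `‖x t‖` is the sup norm (the norm on the Pi type `Fin d → ℝ`).
At each step `t ∈ {1, …, T-1}` every coordinate is either frozen or updated by the AdamW
rule with learning rate `η`, weight decay `λ`, momentum `m`, second moment `v`, and
stabilization constant `ε`, and `m_{t,i}² ≤ 8 (v_{t,i} + ε)`. Under the step-size and
initialization conditions, `λ ‖x t‖_∞ ≤ √ν / T^{1/4}` for all `t ∈ {1, …, T}`. -/
theorem sparse_adamw_iterate_bound
    (T : ℕ) (hT : 1 ≤ T) (d : ℕ) (hd : 1 ≤ d)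
    (η lam ε ν : ℝ) (hη : 0 < η) (hlam : 0 < lam) (hε : 0 < ε) (hν : 0 < ν)
    (hν' : Real.sqrt ν / (T : ℝ) ^ ((1 : ℝ) / 4) < 1)
    (x : ℕ → Fin d → ℝ) (m v : ℕ → Fin d → ℝ)
    (hv : ∀ t ∈ Finset.Icc 1 (T - 1), ∀ i, 0 ≤ v t i)
    (hm : ∀ t ∈ Finset.Icc 1 (T - 1), ∀ i, (m t i) ^ 2 ≤ 8 * (v t i + ε))
    (hstep : ∀ t ∈ Finset.Icc 1 (T - 1), ∀ i,
      x (t + 1) i = x t i ∨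
      x (t + 1) i = x t i - η * m t i / Real.sqrt (v t i + ε) - η * lam * x t i)
    (hηlam : η * lam ≤ Real.sqrt ν / (5 * (T : ℝ) ^ ((5 : ℝ) / 4)))
    (hx1 : lam * ‖x 1‖ ≤ Real.sqrt ν / (4 * (T : ℝ) ^ ((1 : ℝ) / 4))) :
    ∀ t ∈ Finset.Icc 1 T, lam * ‖x t‖ ≤ Real.sqrt ν / (T : ℝ) ^ ((1 : ℝ) / 4) :=
  sparse_adamw_iterate_bound_general T d η lam ε ν hη hlam hν' x m v hm hstep hηlam hx1
end

section
/- Let a, m, x̄ ∈ ℝ, v ≥ 0, ε > 0, L > 0, λ ≥ 0, and 0 < η ≤ √ε/(2L). Write D = √(v + ε) and u = m + λ·x̄·D. Then −η·a·u/D + (η²L/2)·u²/D² ≤ −(η/2)·a²/D − (η/4)·u²/D + η·(a − m)²/√ε + η·λ²·x̄²·D. -/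
/-!
Polarizing `-a u = ((a - u)² - a² - u²) / 2` and splitting `a - u = (a - m) - λ x̄ D` with
`(p + q)² ≤ 2p² + 2q²` bounds the first-order term by `-(η/2) a²/D - (η/2) u²/D` plus the two
error terms (using `√ε ≤ D`); the step-size condition `η L ≤ √ε / 2 ≤ D / 2` lets half of the
`-(η/2) u²/D` absorb the second-order term.
-/

lemma neg_mul_add_le (a b c : ℝ) :
    -(a * (b + c)) ≤ -(a ^ 2 / 2) - (b + c) ^ 2 / 2 + (a - b) ^ 2 + c ^ 2 := by
  nlinarith [sq_nonneg (a - b + c)]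

lemma smoothness_term_le {η L D w : ℝ} (hη : 0 ≤ η) (hD : 0 < D) (hw : 0 ≤ w)
    (hηL : η * L ≤ D / 2) :
    η ^ 2 * L / 2 * w / D ^ 2 ≤ η / 4 * w / D := by
  rw [div_le_div_iff₀ (by positivity) hD]
  have : η * (η * L) * w * D ≤ η * (D / 2) * w * D := by gcongr
  nlinarith

lemma descent_inequality_of_le_of_mul_le {a m lam x η L D s : ℝ} (hs : 0 < s) (hsD : s ≤ D)
    (hη : 0 ≤ η) (hηL : η * L ≤ s / 2) :
    -η * a * (m + lam * x * D) / D + η ^ 2 * L / 2 * (m + lam * x * D) ^ 2 / D ^ 2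
      ≤ -(η / 2) * a ^ 2 / D - η / 4 * (m + lam * x * D) ^ 2 / D
          + η * (a - m) ^ 2 / s + η * lam ^ 2 * x ^ 2 * D := by
  have hD : 0 < D := hs.trans_le hsD
  have first_order : -η * a * (m + lam * x * D) / D
      ≤ -(η / 2) * a ^ 2 / D - η / 2 * (m + lam * x * D) ^ 2 / D
          + η * (a - m) ^ 2 / D + η * lam ^ 2 * x ^ 2 * D := by
    calc -η * a * (m + lam * x * D) / D = η / D * -(a * (m + lam * x * D)) := by ring
      _ ≤ η / D * (-(a ^ 2 / 2) - (m + lam * x * D) ^ 2 / 2 + (a - m) ^ 2 + (lam * x * D) ^ 2) :=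
        mul_le_mul_of_nonneg_left (neg_mul_add_le a m (lam * x * D)) (by positivity)
      _ = _ := by field_simp
  have second_order := smoothness_term_le hη hD (sq_nonneg (m + lam * x * D))
    (hηL.trans (by linarith))
  have error : η * (a - m) ^ 2 / D ≤ η * (a - m) ^ 2 / s :=
    div_le_div_of_nonneg_left (by positivity) hs hsD
  linear_combination first_order + second_order + error

theorem adamw_per_coordinate_descent_inequality_general
    (a m xbar v ε L lam η : ℝ)
    (hv : 0 ≤ v) (hε : 0 < ε) (hL : 0 < L)
    (hη : 0 < η) (hη' : η ≤ Real.sqrt ε / (2 * L)) :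
    -η * a * (m + lam * xbar * Real.sqrt (v + ε)) / Real.sqrt (v + ε)
        + η ^ 2 * L / 2 * (m + lam * xbar * Real.sqrt (v + ε)) ^ 2 / Real.sqrt (v + ε) ^ 2
      ≤ -(η / 2) * a ^ 2 / Real.sqrt (v + ε)
          - η / 4 * (m + lam * xbar * Real.sqrt (v + ε)) ^ 2 / Real.sqrt (v + ε)
          + η * (a - m) ^ 2 / Real.sqrt ε
          + η * lam ^ 2 * xbar ^ 2 * Real.sqrt (v + ε) := by
  have hηL : η * L ≤ Real.sqrt ε / 2 := by
    rw [le_div_iff₀ (by positivity)] at hη'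
    linarith
  exact descent_inequality_of_le_of_mul_le (Real.sqrt_pos.mpr hε)
    (Real.sqrt_le_sqrt (by linarith)) hη.le hηL

/-- Per-coordinate algebraic inequality from the proof of Theorem 1:
with `D = √(v+ε)` and `u = m + λ x̄ D`, if `0 < η ≤ √ε/(2L)` then
`-η a u / D + (η² L / 2) u² / D² ≤ -(η/2) a²/D - (η/4) u²/D + η (a-m)²/√ε + η λ² x̄² D`. -/
theorem adamw_per_coordinate_descent_inequality
    (a m xbar v ε L lam η : ℝ)
    (hv : 0 ≤ v) (hε : 0 < ε) (hL : 0 < L) (hlam : 0 ≤ lam)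
    (hη : 0 < η) (hη' : η ≤ Real.sqrt ε / (2 * L)) :
    -η * a * (m + lam * xbar * Real.sqrt (v + ε)) / Real.sqrt (v + ε)
        + η ^ 2 * L / 2 * (m + lam * xbar * Real.sqrt (v + ε)) ^ 2 / Real.sqrt (v + ε) ^ 2
      ≤ -(η / 2) * a ^ 2 / Real.sqrt (v + ε)
          - η / 4 * (m + lam * xbar * Real.sqrt (v + ε)) ^ 2 / Real.sqrt (v + ε)
          + η * (a - m) ^ 2 / Real.sqrt ε
          + η * lam ^ 2 * xbar ^ 2 * Real.sqrt (v + ε) :=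
  adamw_per_coordinate_descent_inequality_general a m xbar v ε L lam η hv hε hL hη hη'
end

section
/- Let d ≥ 1 and let f : ℝᵈ → ℝ be differentiable and coordinate-wise L-smooth for some L > 0. Let x, m ∈ ℝᵈ, let v ∈ ℝᵈ with v_i ≥ 0 for all i, let ε > 0, λ ≥ 0, c ≥ 0 with λ·|x_i| ≤ c for every coordinate i, and let 0 < η ≤ √ε/(2L). Let (Ω, μ) be a probability space and S : Ω → (subsets of {1,…,d}) a random subset such that μ({ω : i ∈ S(ω)}) = p_i with p_min ≤ p_i ≤ 1 for all i, where p_min > 0. Define the random vector x⁺ by x⁺_i = x_i − η·(m_i + λ·x_i·√(v_i + ε))/√(v_i + ε) for i ∈ S(ω) and x⁺_i = x_i otherwise. Then E[f(x⁺)] ≤ f(x) − (η·p_min/2)·∑_{i=1}^d (∂_i f(x))²/√(v_i + ε) − (η·p_min/4)·∑_{i=1}^d (m_i + λ·x_i·√(v_i + ε))²/√(v_i + ε) + (η/√ε)·∑_{i=1}^d (∂_i f(x) − m_i)² + η·c²·∑_{i=1}^d √(v_i + ε). -/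
/-!
Along a segment `s ↦ x + s • w` the directional derivative of a coordinate-wise `L`-smooth `f`
grows by at most `L ‖w‖² s`, which gives the descent lemma
`f y ≤ f x + ⟪∇f x, y - x⟫ + L/2 ‖y - x‖²`. For a sparse step `y - x` vanishes off the active
coordinates, so in expectation the contribution of coordinate `i` is weighted by `p i`.
Writing `sᵢ = √(vᵢ + ε)`, `hᵢ = mᵢ + λ xᵢ sᵢ` and `gᵢ = ∂ᵢ f x`, the step is `η hᵢ / sᵢ`; since
`2 L η ≤ √ε ≤ sᵢ` its curvature term is at most `η hᵢ² / (4 sᵢ)`, and the linear term splits as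
`-gᵢ hᵢ = ((gᵢ - hᵢ)² - gᵢ² - hᵢ²) / 2` with `(gᵢ - hᵢ)² ≤ 2 (gᵢ - mᵢ)² + 2 (λ xᵢ sᵢ)²`.
-/

open MeasureTheory Set

lemma le_add_deriv_mul_add_of_deriv_sub_le {g g' : ℝ → ℝ} {K t : ℝ} (ht : 0 ≤ t)
    (hg : ∀ s, HasDerivAt g (g' s) s) (hK : ∀ s ∈ Icc 0 t, g' s - g' 0 ≤ K * s) :
    g t ≤ g 0 + g' 0 * t + K / 2 * t ^ 2 := by
  have hh : ∀ s, HasDerivAt (fun s => g s - g' 0 * s - K / 2 * s ^ 2) (g' s - g' 0 - K * s) s :=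
    fun s => (((hg s).sub ((hasDerivAt_id' s).const_mul _)).sub
      ((hasDerivAt_pow 2 s).const_mul _)).congr_deriv (by ring)
  have := antitoneOn_of_hasDerivWithinAt_nonpos (convex_Icc 0 t)
    (fun s _ => (hh s).continuousAt.continuousWithinAt) (fun s _ => (hh s).hasDerivWithinAt)
    (fun s hs => by have := hK s (interior_subset hs); linarith)
    (left_mem_Icc.2 ht) (right_mem_Icc.2 ht) ht
  simp only at this
  linarith

section Coordinates

variable {ι : Type*} [Fintype ι] [DecidableEq ι]

lemma ContinuousLinearMap.pi_apply_eq_sum_mul_single (φ : (ι → ℝ) →L[ℝ] ℝ) (w : ι → ℝ) :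
    φ w = ∑ i, w i * φ (Pi.single i 1) := by
  conv_lhs => rw [← Finset.univ_sum_single w, map_sum]
  congr! with i
  rw [← smul_eq_mul, ← map_smul, ← Pi.single_smul', smul_eq_mul, mul_one]

def CoordSmooth (L : ℝ) (f : (ι → ℝ) → ℝ) : Prop :=
  ∀ (i : ι) (x y : ι → ℝ),
    |fderiv ℝ f x (Pi.single i 1) - fderiv ℝ f y (Pi.single i 1)| ≤ L * |x i - y i|

namespace CoordSmooth

variable {L : ℝ} {f : (ι → ℝ) → ℝ}

lemma fderiv_add_smul_apply_sub_le (hf : CoordSmooth L f) (x w : ι → ℝ) {s : ℝ} (hs : 0 ≤ s) :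
    fderiv ℝ f (x + s • w) w - fderiv ℝ f x w ≤ L * (∑ i, w i ^ 2) * s := by
  simp only [ContinuousLinearMap.pi_apply_eq_sum_mul_single (fderiv ℝ f _) w,
    ← Finset.sum_sub_distrib, Finset.mul_sum, Finset.sum_mul, ← mul_sub]
  refine Finset.sum_le_sum fun i _ => ?_
  calc w i * (fderiv ℝ f (x + s • w) (Pi.single i 1) - fderiv ℝ f x (Pi.single i 1))
      ≤ |w i| * |fderiv ℝ f (x + s • w) (Pi.single i 1) - fderiv ℝ f x (Pi.single i 1)| :=
        (le_abs_self _).trans_eq (abs_mul _ _)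
    _ ≤ |w i| * (L * |(x + s • w) i - x i|) := by gcongr; exact hf i _ _
    _ = L * w i ^ 2 * s := by
        simp only [Pi.add_apply, Pi.smul_apply, smul_eq_mul, add_sub_cancel_left, abs_mul,
          abs_of_nonneg hs]
        rw [← sq_abs (w i)]; ring

theorem descent_lemma (hf : CoordSmooth L f) (hdiff : Differentiable ℝ f) (x y : ι → ℝ) :
    f y ≤ f x + ∑ i, fderiv ℝ f x (Pi.single i 1) * (y i - x i)
      + L / 2 * ∑ i, (y i - x i) ^ 2 := by
  have hline (s : ℝ) :
      HasDerivAt (fun s => f (x + s • (y - x))) (fderiv ℝ f (x + s • (y - x)) (y - x)) s :=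
    (hdiff _).hasFDerivAt.comp_hasDerivAt s
      (((hasDerivAt_id s).smul_const _).const_add x |>.congr_deriv (one_smul ℝ _))
  have := le_add_deriv_mul_add_of_deriv_sub_le zero_le_one hline
    fun s hs => by simpa using hf.fderiv_add_smul_apply_sub_le x (y - x) hs.1
  simp only [zero_smul, add_zero, one_smul, one_pow, mul_one, add_sub_cancel] at this
  rw [(fderiv ℝ f x).pi_apply_eq_sum_mul_single] at this
  simp only [Pi.sub_apply, mul_comm (y _ - x _)] at this
  linarith

theorem sparse_descent (hf : CoordSmooth L f) (hdiff : Differentiable ℝ f) (S : Finset ι)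
    (x u : ι → ℝ) :
    f (fun i => if i ∈ S then x i - u i else x i)
      ≤ f x + ∑ i ∈ S, (L / 2 * u i ^ 2 - fderiv ℝ f x (Pi.single i 1) * u i) := by
  refine (hf.descent_lemma hdiff x _).trans_eq ?_
  rw [add_assoc, Finset.mul_sum, ← Finset.sum_add_distrib,
    ← Finset.sum_subset S.subset_univ fun i _ hi => by simp [hi]]
  exact congrArg _ (Finset.sum_congr rfl fun i hi => by simp only [hi, if_true]; ring)

end CoordSmooth

lemma Finset.sum_mem_eq_sum_indicator {Ω : Type*} (S : Ω → Finset ι) (a : ι → ℝ) :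
    (fun ω => ∑ i ∈ S ω, a i) = fun ω => ∑ i, {ω | i ∈ S ω}.indicator (fun _ => a i) ω := by
  ext ω
  simp [Set.indicator_apply]

section RandomSubset

variable {Ω : Type*} [MeasurableSpace Ω] {μ : Measure Ω} {S : Ω → Finset ι}

lemma integrable_comp_ite_mem [IsFiniteMeasure μ] (hS : ∀ i, MeasurableSet {ω | i ∈ S ω})
    {g : (ι → ℝ) → ℝ} (hg : Continuous g) (x y : ι → ℝ) :
    Integrable (fun ω => g (fun i => if i ∈ S ω then y i else x i)) μ := by
  let G (t : Finset ι) := g (fun i => if i ∈ t then y i else x i)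
  refine .of_bound (hg.measurable.comp (measurable_pi_lambda _ fun i =>
    Measurable.ite (hS i) measurable_const measurable_const)).aestronglyMeasurable
    (∑ t, |G t|) (.of_forall fun ω => ?_)
  exact Finset.single_le_sum (f := fun t => |G t|) (fun _ _ => abs_nonneg _) (Finset.mem_univ _)

lemma integrable_sum_mem [IsFiniteMeasure μ] (hS : ∀ i, MeasurableSet {ω | i ∈ S ω})
    (a : ι → ℝ) : Integrable (fun ω => ∑ i ∈ S ω, a i) μ := by
  rw [Finset.sum_mem_eq_sum_indicator]
  exact integrable_finsetSum _ fun i _ => (integrable_const (a i)).indicator (hS i)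

lemma integral_sum_mem [IsFiniteMeasure μ] (hS : ∀ i, MeasurableSet {ω | i ∈ S ω})
    (a : ι → ℝ) :
    ∫ ω, ∑ i ∈ S ω, a i ∂μ = ∑ i, μ.real {ω | i ∈ S ω} * a i := by
  rw [Finset.sum_mem_eq_sum_indicator, integral_finsetSum _ fun i _ =>
    (integrable_const (a i)).indicator (hS i)]
  simp only [integral_indicator_const _ (hS _), smul_eq_mul]

end RandomSubset

end Coordinates

lemma scaled_step_le {L η s : ℝ} (hs : 0 < s) (hη : 0 ≤ η) (hLη : 2 * L * η ≤ s) (g h : ℝ) :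
    L / 2 * (η * h / s) ^ 2 - g * (η * h / s)
      ≤ η / s * ((g - h) ^ 2 / 2 - g ^ 2 / 2 - h ^ 2 / 4) := by
  have key : L / 2 * (η * h / s) ^ 2 ≤ η / s * (h ^ 2 / 4) :=
    calc L / 2 * (η * h / s) ^ 2 = η / s * (h ^ 2 / 4) * (2 * L * η / s) := by
          field_simp; ring
      _ ≤ η / s * (h ^ 2 / 4) * 1 := by
          gcongr
          exact (div_le_one hs).2 hLη
      _ = η / s * (h ^ 2 / 4) := mul_one _
  linear_combination key

lemma adamw_coord_le {L η s s₀ pmin p lam c g m xi : ℝ} (hs₀ : 0 < s₀) (hs₀s : s₀ ≤ s)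
    (hη : 0 ≤ η) (hLη : 2 * L * η ≤ s₀) (hpmin : 0 ≤ pmin) (hp : pmin ≤ p) (hp1 : p ≤ 1)
    (hlam : 0 ≤ lam) (hxc : lam * |xi| ≤ c) :
    p * (L / 2 * (η * (m + lam * xi * s) / s) ^ 2 - g * (η * (m + lam * xi * s) / s))
      ≤ -(η * pmin / 2 * (g ^ 2 / s)) - η * pmin / 4 * ((m + lam * xi * s) ^ 2 / s)
        + η / s₀ * (g - m) ^ 2 + η * c ^ 2 * s := by
  set h := m + lam * xi * s
  have hs : 0 < s := hs₀.trans_le hs₀s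
  have hcross : (g - h) ^ 2 / 2 ≤ (g - m) ^ 2 + (lam * xi * s) ^ 2 := by
    nlinarith [sq_nonneg (g - m + lam * xi * s)]
  have hlamx : (lam * xi) ^ 2 ≤ c ^ 2 := by
    rw [← sq_abs, abs_mul, abs_of_nonneg hlam]
    exact pow_le_pow_left₀ (by positivity) hxc 2
  calc p * (L / 2 * (η * h / s) ^ 2 - g * (η * h / s))
      ≤ p * (η / s * ((g - h) ^ 2 / 2 - g ^ 2 / 2 - h ^ 2 / 4)) := by
        gcongr
        · linarith
        · exact scaled_step_le hs hη (by linarith) g h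
    _ ≤ η / s * ((g - h) ^ 2 / 2) - pmin * (η / s * (g ^ 2 / 2 + h ^ 2 / 4)) := by
        have : 0 ≤ η / s * (g ^ 2 / 2 + h ^ 2 / 4) := by positivity
        have : 0 ≤ η / s * ((g - h) ^ 2 / 2) := by positivity
        nlinarith
    _ ≤ η / s * ((g - m) ^ 2 + (lam * xi * s) ^ 2)
          - pmin * (η / s * (g ^ 2 / 2 + h ^ 2 / 4)) := by gcongr
    _ ≤ η / s₀ * (g - m) ^ 2 + η * c ^ 2 * s
          - pmin * (η / s * (g ^ 2 / 2 + h ^ 2 / 4)) := by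
        have h1 : η / s * (g - m) ^ 2 ≤ η / s₀ * (g - m) ^ 2 := by gcongr
        have h2 : η / s * (lam * xi * s) ^ 2 ≤ η * c ^ 2 * s := by
          calc η / s * (lam * xi * s) ^ 2 = η * (lam * xi) ^ 2 * s := by field_simp
            _ ≤ η * c ^ 2 * s := by gcongr
        linarith
    _ = _ := by ring

theorem sparse_adamw_expected_descent_general
    {Ω : Type*} [MeasurableSpace Ω] (μ : Measure Ω) [IsProbabilityMeasure μ]
    (d : ℕ)
    (f : (Fin d → ℝ) → ℝ) (L : ℝ) (hL : 0 < L)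
    (hdiff : Differentiable ℝ f)
    (hsmooth : ∀ (i : Fin d) (x y : Fin d → ℝ),
      |fderiv ℝ f x (Pi.single i 1) - fderiv ℝ f y (Pi.single i 1)| ≤ L * |x i - y i|)
    (x m v : Fin d → ℝ) (hv : ∀ i, 0 ≤ v i)
    (ε lam c η : ℝ) (hε : 0 < ε) (hlam : 0 ≤ lam)
    (hxc : ∀ i, lam * |x i| ≤ c)
    (hη : 0 < η) (hη' : η ≤ Real.sqrt ε / (2 * L))
    (S : Ω → Finset (Fin d)) (p : Fin d → ℝ) (pmin : ℝ) (hpmin : 0 < pmin)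
    (hp : ∀ i, pmin ≤ p i ∧ p i ≤ 1)
    (hSmeas : ∀ i, MeasurableSet {ω | i ∈ S ω})
    (hSprob : ∀ i, μ {ω | i ∈ S ω} = ENNReal.ofReal (p i)) :
    ∫ ω, f (fun i => if i ∈ S ω then
        x i - η * (m i + lam * x i * Real.sqrt (v i + ε)) / Real.sqrt (v i + ε)
      else x i) ∂μ
      ≤ f x
        - η * pmin / 2 * ∑ i, (fderiv ℝ f x (Pi.single i 1)) ^ 2 / Real.sqrt (v i + ε)
        - η * pmin / 4 *
            ∑ i, (m i + lam * x i * Real.sqrt (v i + ε)) ^ 2 / Real.sqrt (v i + ε)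
        + η / Real.sqrt ε * ∑ i, (fderiv ℝ f x (Pi.single i 1) - m i) ^ 2
        + η * c ^ 2 * ∑ i, Real.sqrt (v i + ε) := by
  have hs₀ : 0 < √ε := Real.sqrt_pos.2 hε
  have hs₀s (i : Fin d) : √ε ≤ √(v i + ε) := Real.sqrt_le_sqrt (by linarith [hv i])
  have hLη : 2 * L * η ≤ √ε := by rwa [le_div_iff₀ (by positivity), mul_comm] at hη'
  let u i := η * (m i + lam * x i * √(v i + ε)) / √(v i + ε)
  let a i := L / 2 * u i ^ 2 - fderiv ℝ f x (Pi.single i 1) * u i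
  calc ∫ ω, f (fun i => if i ∈ S ω then x i - u i else x i) ∂μ
      ≤ ∫ ω, (f x + ∑ i ∈ S ω, a i) ∂μ :=
        integral_mono (integrable_comp_ite_mem hSmeas hdiff.continuous x _)
          ((integrable_const _).add (integrable_sum_mem hSmeas a))
          fun ω => CoordSmooth.sparse_descent hsmooth hdiff (S ω) x u
    _ = f x + ∑ i, p i * a i := by
        rw [integral_add (integrable_const _) (integrable_sum_mem hSmeas a),
          integral_sum_mem hSmeas]
        simp [measureReal_def, hSprob, ENNReal.toReal_ofReal (hpmin.le.trans (hp _).1)]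
    _ ≤ f x + ∑ i, (-(η * pmin / 2 * (fderiv ℝ f x (Pi.single i 1) ^ 2 / √(v i + ε)))
          - η * pmin / 4 * ((m i + lam * x i * √(v i + ε)) ^ 2 / √(v i + ε))
          + η / √ε * (fderiv ℝ f x (Pi.single i 1) - m i) ^ 2 + η * c ^ 2 * √(v i + ε)) := by
        gcongr with i
        exact adamw_coord_le hs₀ (hs₀s i) hη.le hLη hpmin.le (hp i).1 (hp i).2 hlam (hxc i)
    _ = _ := by
        simp only [Finset.sum_add_distrib, Finset.sum_sub_distrib, Finset.sum_neg_distrib,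
          Finset.mul_sum]
        ring

/-- One-step expected descent inequality for a sparse AdamW step:
only a random subset `S ω` of coordinates is updated, coordinate `i` being active with
probability `p i ∈ [pmin, 1]`. Here `f : ℝᵈ → ℝ` is differentiable and coordinate-wise
`L`-smooth (`|∂ᵢf(x) - ∂ᵢf(y)| ≤ L |xᵢ - yᵢ|`), partial derivatives are
`fderiv ℝ f x (Pi.single i 1)`, `λ |xᵢ| ≤ c`, and `0 < η ≤ √ε/(2L)`. -/
theorem sparse_adamw_expected_descent
    {Ω : Type*} [MeasurableSpace Ω] (μ : Measure Ω) [IsProbabilityMeasure μ]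
    (d : ℕ) (hd : 1 ≤ d)
    (f : (Fin d → ℝ) → ℝ) (L : ℝ) (hL : 0 < L)
    (hdiff : Differentiable ℝ f)
    (hsmooth : ∀ (i : Fin d) (x y : Fin d → ℝ),
      |fderiv ℝ f x (Pi.single i 1) - fderiv ℝ f y (Pi.single i 1)| ≤ L * |x i - y i|)
    (x m v : Fin d → ℝ) (hv : ∀ i, 0 ≤ v i)
    (ε lam c η : ℝ) (hε : 0 < ε) (hlam : 0 ≤ lam) (hc : 0 ≤ c)
    (hxc : ∀ i, lam * |x i| ≤ c)
    (hη : 0 < η) (hη' : η ≤ Real.sqrt ε / (2 * L))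
    (S : Ω → Finset (Fin d)) (p : Fin d → ℝ) (pmin : ℝ) (hpmin : 0 < pmin)
    (hp : ∀ i, pmin ≤ p i ∧ p i ≤ 1)
    (hSmeas : ∀ i, MeasurableSet {ω | i ∈ S ω})
    (hSprob : ∀ i, μ {ω | i ∈ S ω} = ENNReal.ofReal (p i)) :
    ∫ ω, f (fun i => if i ∈ S ω then
        x i - η * (m i + lam * x i * Real.sqrt (v i + ε)) / Real.sqrt (v i + ε)
      else x i) ∂μ
      ≤ f x
        - η * pmin / 2 * ∑ i, (fderiv ℝ f x (Pi.single i 1)) ^ 2 / Real.sqrt (v i + ε)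
        - η * pmin / 4 *
            ∑ i, (m i + lam * x i * Real.sqrt (v i + ε)) ^ 2 / Real.sqrt (v i + ε)
        + η / Real.sqrt ε * ∑ i, (fderiv ℝ f x (Pi.single i 1) - m i) ^ 2
        + η * c ^ 2 * ∑ i, Real.sqrt (v i + ε) :=
  sparse_adamw_expected_descent_general μ d f L hL hdiff hsmooth x m v hv ε lam c η hε hlam hxc hη
    hη' S p pmin hpmin hp hSmeas hSprob
end

section
/- Let E be a real inner product space, let A, B, C ∈ E, let β ∈ (0, 1), and set θ = ⌈1/(1 − β^{5/4})⌉. Then ‖β·(A − B) + (1 − β)·C‖² ≤ √β·‖A‖² + (β^{3/4}/(1 − β^{1/4}))·‖B‖² + θ·(1 − β)²·‖C‖². -/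
/-!
Write `u = β^{1/4}`, so that `β = u⁴`, `√β = u²`, `β^{3/4} = u³` and `β^{5/4} = u⁵`.
Two weighted Young inequalities `(a + b)² ≤ a²/t + b²/(1 - t)` do the work: the first, with
`t = u⁵`, separates the noise `C` and leaves `β²/u⁵ = u³` in front of `‖A - B‖²`; the second,
with `t = u`, splits `‖A - B‖²` into `‖A‖²/u + ‖B‖²/(1 - u)`. Finally `1/(1 - u⁵) ≤ θ`.
-/

lemma add_sq_le_div_add_div (a b : ℝ) {t : ℝ} (ht₀ : 0 < t) (ht₁ : t < 1) :
    (a + b) ^ 2 ≤ a ^ 2 / t + b ^ 2 / (1 - t) := by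
  have ht₁' : 0 < 1 - t := sub_pos.mpr ht₁
  rw [div_add_div _ _ ht₀.ne' ht₁'.ne', le_div_iff₀ (by positivity)]
  nlinarith [sq_nonneg ((1 - t) * a - t * b)]

lemma norm_add_sq_le_div_add_div {E : Type*} [SeminormedAddGroup E] (x y : E) {t : ℝ}
    (ht₀ : 0 < t) (ht₁ : t < 1) :
    ‖x + y‖ ^ 2 ≤ ‖x‖ ^ 2 / t + ‖y‖ ^ 2 / (1 - t) :=
  (pow_le_pow_left₀ (norm_nonneg _) (norm_add_le x y) 2).trans
    (add_sq_le_div_add_div _ _ ht₀ ht₁)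

lemma norm_sub_sq_le_div_add_div {E : Type*} [SeminormedAddGroup E] (x y : E) {t : ℝ}
    (ht₀ : 0 < t) (ht₁ : t < 1) :
    ‖x - y‖ ^ 2 ≤ ‖x‖ ^ 2 / t + ‖y‖ ^ 2 / (1 - t) := by
  simpa only [sub_eq_add_neg, norm_neg] using norm_add_sq_le_div_add_div x (-y) ht₀ ht₁

lemma norm_smul_sub_add_smul_sq_le {E : Type*} [SeminormedAddCommGroup E] [NormedSpace ℝ E]
    (A B C : E) {u : ℝ} (hu₀ : 0 < u) (hu₁ : u < 1) :
    ‖u ^ 4 • (A - B) + (1 - u ^ 4) • C‖ ^ 2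
      ≤ u ^ 2 * ‖A‖ ^ 2 + u ^ 3 / (1 - u) * ‖B‖ ^ 2
        + (1 - u ^ 4) ^ 2 / (1 - u ^ 5) * ‖C‖ ^ 2 := by
  have hu₄ : 0 ≤ 1 - u ^ 4 := sub_nonneg.mpr (pow_le_one₀ hu₀.le hu₁.le)
  have hu₅ : u ^ 5 < 1 := pow_lt_one₀ hu₀.le hu₁ (by norm_num)
  calc ‖u ^ 4 • (A - B) + (1 - u ^ 4) • C‖ ^ 2
      ≤ ‖u ^ 4 • (A - B)‖ ^ 2 / u ^ 5 + ‖(1 - u ^ 4) • C‖ ^ 2 / (1 - u ^ 5) :=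
        norm_add_sq_le_div_add_div _ _ (by positivity) hu₅
    _ = u ^ 3 * ‖A - B‖ ^ 2 + (1 - u ^ 4) ^ 2 / (1 - u ^ 5) * ‖C‖ ^ 2 := by
        rw [norm_smul, norm_smul, Real.norm_of_nonneg (by positivity), Real.norm_of_nonneg hu₄]
        field_simp
    _ ≤ u ^ 3 * (‖A‖ ^ 2 / u + ‖B‖ ^ 2 / (1 - u))
          + (1 - u ^ 4) ^ 2 / (1 - u ^ 5) * ‖C‖ ^ 2 := by
        gcongr
        exact norm_sub_sq_le_div_add_div A B hu₀ hu₁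
    _ = u ^ 2 * ‖A‖ ^ 2 + u ^ 3 / (1 - u) * ‖B‖ ^ 2
          + (1 - u ^ 4) ^ 2 / (1 - u ^ 5) * ‖C‖ ^ 2 := by
        field_simp

lemma rpow_one_div_pow_eq_rpow_div {x : ℝ} (hx : 0 ≤ x) (k : ℝ) (n : ℕ) :
    (x ^ (1 / k)) ^ n = x ^ ((n : ℝ) / k) := by
  rw [← Real.rpow_natCast, ← Real.rpow_mul hx, one_div_mul_eq_div]

/-- The deterministic Young-inequality step from the proof of Lemma 5:
for vectors `A, B, C` in a real inner product space, `β ∈ (0,1)`, and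
`θ = ⌈1/(1 - β^{5/4})⌉`,
`‖β (A - B) + (1-β) C‖² ≤ √β ‖A‖² + (β^{3/4}/(1-β^{1/4})) ‖B‖² + θ (1-β)² ‖C‖²`. -/
theorem young_momentum_error_inequality
    {E : Type*} [NormedAddCommGroup E] [InnerProductSpace ℝ E]
    (A B C : E) (β : ℝ) (hβ : 0 < β) (hβ' : β < 1) :
    ‖β • (A - B) + (1 - β) • C‖ ^ 2
      ≤ Real.sqrt β * ‖A‖ ^ 2
        + β ^ ((3 : ℝ) / 4) / (1 - β ^ ((1 : ℝ) / 4)) * ‖B‖ ^ 2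
        + (⌈(1 - β ^ ((5 : ℝ) / 4))⁻¹⌉₊ : ℝ) * (1 - β) ^ 2 * ‖C‖ ^ 2 := by
  set u := β ^ ((1 : ℝ) / 4)
  have hu₀ : 0 < u := Real.rpow_pos_of_pos hβ _
  have hu₁ : u < 1 := Real.rpow_lt_one hβ.le hβ' (by norm_num)
  have hpow (n : ℕ) : β ^ ((n : ℝ) / 4) = u ^ n := (rpow_one_div_pow_eq_rpow_div hβ.le 4 n).symm
  have hβu : β = u ^ 4 := by rw [← hpow 4]; norm_num
  have hsqrt : Real.sqrt β = u ^ 2 := by rw [Real.sqrt_eq_rpow, ← hpow 2]; norm_num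
  have hceil : (1 - u ^ 5)⁻¹ ≤ (⌈(1 - β ^ ((5 : ℝ) / 4))⁻¹⌉₊ : ℝ) := by
    rw [← hpow 5]; exact_mod_cast Nat.le_ceil _
  rw [hsqrt, show β ^ ((3 : ℝ) / 4) = u ^ 3 by exact_mod_cast hpow 3]
  calc ‖β • (A - B) + (1 - β) • C‖ ^ 2
      ≤ u ^ 2 * ‖A‖ ^ 2 + u ^ 3 / (1 - u) * ‖B‖ ^ 2
        + (1 - u ^ 5)⁻¹ * (1 - β) ^ 2 * ‖C‖ ^ 2 := by
        rw [hβu, inv_mul_eq_div]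
        exact norm_smul_sub_add_smul_sq_le A B C hu₀ hu₁
    _ ≤ _ := by gcongr
end
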